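/- Assume the anisotropic ADMM scheme, and assume in addition: (A.1) the sequences (β_t^k) and (β_s^k) are increasing, the series ∑_{k≥1} √(k/β_t^k) and ∑_{k≥1} √(k/β_s^k) converge, and β_s^k/β_t^k converges to some c ≠ 0; (A.2) the matrices D_h and D_v are injective (full rank). Then the sequences (t^k), (s^k) and (u^k) converge: there exist t*, s*, u* ∈ ℝ^N with t^k → t*, s^k → s*, u^k → u*, and moreover t* = D_h u* and s* = D_v u*. -/

import Mathlib

/-!
Comparing the ℓ⁰ steps with the unpenalised point `D_h u^k + λ_t^k / β_t^k` bounds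
`β_t^k ‖t^{k+1} - D_h u^k - λ_t^k / β_t^k‖²` by `2μN`, and comparing the `u`-step with `u^k` then
shows that the misfit `‖A u^k - g‖²` grows at most linearly in `k`, so that the other residual
`v_k = D_h u^{k+1} - t^{k+1} + λ_t^k / β_t^k` satisfies `β_t^k ‖v_k‖² = O(k)`. Both residuals are
thus `O(√(k / β_t^k))`, a summable sequence, so `D_h u^k` is Cauchy, and `u^k` converges because
`D_h` is invertible. The dual update reads `λ_t^{k+1} = β_t^k v_k`; as `β_t` increases,
`t^{k+2} - D_h u^{k+2} = (β_t^k / β_t^{k+1}) v_k - v_{k+1} → 0`. The same argument applies to `s`.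
-/

open Matrix Filter Topology

/-- Euclidean norm of a vector in `ℝ^n`. -/
noncomputable def eucNorm {n : ℕ} (v : Fin n → ℝ) : ℝ :=
  Real.sqrt (∑ i, (v i) ^ 2)

/-- ℓ⁰ "norm": number of nonzero entries of a vector. -/
noncomputable def l0 {n : ℕ} (v : Fin n → ℝ) : ℕ :=
  (Finset.univ.filter fun i => v i ≠ 0).card

/-- Isotropic ℓ⁰ count: number of indices where the pair of entries is nonzero. -/
noncomputable def l02 {n : ℕ} (zh zv : Fin n → ℝ) : ℕ :=
  (Finset.univ.filter fun i => zh i ≠ 0 ∨ zv i ≠ 0).card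

lemma eucNorm_eq_norm_toLp {n : ℕ} (v : Fin n → ℝ) : eucNorm v = ‖WithLp.toLp 2 v‖ := by
  simp [eucNorm, EuclideanSpace.norm_eq, sq_abs]

lemma eucNorm_nonneg {n : ℕ} (v : Fin n → ℝ) : 0 ≤ eucNorm v := Real.sqrt_nonneg _

lemma eucNorm_zero {n : ℕ} : eucNorm (0 : Fin n → ℝ) = 0 := by simp [eucNorm]

lemma eucNorm_neg {n : ℕ} (v : Fin n → ℝ) : eucNorm (-v) = eucNorm v := by simp [eucNorm]

lemma eucNorm_sub_le {n : ℕ} (v w : Fin n → ℝ) : eucNorm (v - w) ≤ eucNorm v + eucNorm w := by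
  simpa only [eucNorm_eq_norm_toLp, WithLp.toLp_sub] using norm_sub_le _ _

lemma eucNorm_add_le {n : ℕ} (v w : Fin n → ℝ) : eucNorm (v + w) ≤ eucNorm v + eucNorm w := by
  simpa only [sub_neg_eq_add, eucNorm_neg] using eucNorm_sub_le v (-w)

lemma eucNorm_smul {n : ℕ} (c : ℝ) (v : Fin n → ℝ) : eucNorm (c • v) = |c| * eucNorm v := by
  simp only [eucNorm_eq_norm_toLp, WithLp.toLp_smul, norm_smul, Real.norm_eq_abs]

lemma eucNorm_sub_sub {n : ℕ} (x y z : Fin n → ℝ) :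
    eucNorm (x - (y - z)) = eucNorm (y - (x + z)) := by
  rw [← eucNorm_neg, neg_sub, sub_sub, add_comm]

lemma norm_le_eucNorm {n : ℕ} (v : Fin n → ℝ) : ‖v‖ ≤ eucNorm v :=
  (pi_norm_le_iff_of_nonneg (eucNorm_nonneg v)).2 fun i => by
    rw [eucNorm_eq_norm_toLp]
    exact PiLp.norm_apply_le (WithLp.toLp 2 v) i

lemma tendsto_zero_of_eucNorm_le {n : ℕ} {ι : Type*} {l : Filter ι} {f : ι → Fin n → ℝ}
    {b : ι → ℝ} (hf : ∀ i, eucNorm (f i) ≤ b i) (hb : Tendsto b l (𝓝 0)) :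
    Tendsto f l (𝓝 0) :=
  squeeze_zero_norm (fun i => (norm_le_eucNorm _).trans (hf i)) hb

lemma exists_tendsto_of_summable_eucNorm_sub {n : ℕ} {f : ℕ → Fin n → ℝ}
    (h : Summable fun k => eucNorm (f (k + 1) - f k)) : ∃ a, Tendsto f atTop (𝓝 a) :=
  cauchySeq_tendsto_of_complete <| cauchySeq_of_dist_le_of_summable _
    (fun k => by rw [dist_comm, dist_eq_norm]; exact norm_le_eucNorm _) h

lemma Matrix.exists_tendsto_of_tendsto_mulVec {n ι : Type*} [Fintype n] [DecidableEq n]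
    {D : Matrix n n ℝ} (hD : Function.Injective D.mulVec) {l : Filter ι} {u : ι → n → ℝ}
    {w : n → ℝ} (h : Tendsto (fun k => D *ᵥ u k) l (𝓝 w)) :
    ∃ u₀, Tendsto u l (𝓝 u₀) ∧ w = D *ᵥ u₀ := by
  have hdet : IsUnit D.det := (isUnit_iff_isUnit_det D).1 (mulVec_injective_iff_isUnit.1 hD)
  have hinv : ∀ x, D⁻¹ *ᵥ (D *ᵥ x) = x := fun x => by
    rw [mulVec_mulVec, nonsing_inv_mul D hdet, one_mulVec]
  refine ⟨D⁻¹ *ᵥ w, ?_, by rw [mulVec_mulVec, mul_nonsing_inv D hdet, one_mulVec]⟩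
  have hcont : Continuous fun x : n → ℝ => D⁻¹ *ᵥ x :=
    continuous_const.matrix_mulVec continuous_id
  simpa only [Function.comp_def, hinv] using (hcont.tendsto w).comp h

lemma l0_le_card {n : ℕ} (v : Fin n → ℝ) : l0 v ≤ n := by
  simpa [l0] using Finset.card_filter_le (Finset.univ : Finset (Fin n)) (fun i => v i ≠ 0)

lemma mul_sq_eucNorm_sub_le_of_l0_min {n : ℕ} {μ β : ℝ} (hμ : 0 ≤ μ) {x y : Fin n → ℝ}
    (hmin : μ * l0 x + β / 2 * eucNorm (x - y) ^ 2 ≤ μ * l0 y + β / 2 * eucNorm (y - y) ^ 2) :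
    β * eucNorm (x - y) ^ 2 ≤ 2 * (μ * n) := by
  rw [sub_self, eucNorm_zero] at hmin
  have hy : μ * (l0 y : ℝ) ≤ μ * n :=
    mul_le_mul_of_nonneg_left (by exact_mod_cast l0_le_card y) hμ
  have hx : 0 ≤ μ * (l0 x : ℝ) := by positivity
  linarith

lemma le_mul_succ_of_descent {E r : ℕ → ℝ} {a : ℝ} (hE : ∀ k, 0 ≤ E k) (hr : ∀ k, 0 ≤ r k)
    (h : ∀ k, E (k + 1) + r k ≤ E k + a) (k : ℕ) : r k ≤ (E 0 + a) * (k + 1) := by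
  have hE_le : ∀ k : ℕ, E k ≤ E 0 + a * k := by
    intro k
    induction k with
    | zero => simp
    | succ k ih => push_cast; linarith [h k, hr k]
  nlinarith [h k, hE (k + 1), hE_le k, hE 0, (k.cast_nonneg : (0 : ℝ) ≤ k)]

lemma summable_sqrt_succ_div {β : ℕ → ℝ} (hβ : ∀ k, 0 ≤ β k)
    (h : Summable fun k : ℕ => √((k : ℝ) / β k)) :
    Summable fun k : ℕ => √(((k : ℝ) + 1) / β k) := by
  rw [← summable_nat_add_iff 1]
  refine .of_nonneg_of_le (fun _ => Real.sqrt_nonneg _) (fun k => ?_)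
    (((summable_nat_add_iff 1).2 h).mul_left √2)
  rw [← Real.sqrt_mul zero_le_two, ← mul_div_assoc]
  gcongr
  · exact hβ _
  · push_cast; linarith

lemma eucNorm_le_sqrt_mul_sqrt_div {n : ℕ} {x : Fin n → ℝ} {β C c : ℝ} (hβ : 0 < β)
    (hc : 0 ≤ c) (h : β * eucNorm x ^ 2 ≤ C * c) : eucNorm x ≤ √C * √(c / β) := by
  rw [← Real.sqrt_mul' C (div_nonneg hc hβ.le), ← Real.sqrt_sq (eucNorm_nonneg x)]
  refine Real.sqrt_le_sqrt ?_
  rw [mul_div_assoc', le_div_iff₀ hβ]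
  linarith

lemma eq_smul_residual_of_dual_update {K V : Type*} [Field K] [AddCommGroup V] [Module K V]
    {β : K} (hβ : β ≠ 0) {l l' x y : V} (h : l' = l - β • (x - y)) :
    l' = β • (y - (x - β⁻¹ • l)) := by
  rw [h]
  simp only [smul_sub, smul_inv_smul₀ hβ]
  abel

theorem admm_block_tendsto {n : ℕ} (D : Matrix (Fin n) (Fin n) ℝ) (t u l : ℕ → Fin n → ℝ)
    (β : ℕ → ℝ) {C : ℝ} (hβ : ∀ k, 0 < β k) (hmono : Monotone β)
    (hsum : Summable fun k : ℕ => √((k : ℝ) / β k))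
    (hc : ∀ k, β k * eucNorm (t (k + 1) - (D *ᵥ u k + (β k)⁻¹ • l k)) ^ 2 ≤ C * (k + 1))
    (hv : ∀ k, β k * eucNorm (D *ᵥ u (k + 1) - (t (k + 1) - (β k)⁻¹ • l k)) ^ 2 ≤ C * (k + 1))
    (hl : ∀ k, l (k + 1) = l k - β k • (t (k + 1) - D *ᵥ u (k + 1)))
    (hD : Function.Injective D.mulVec) :
    ∃ tstar ustar, Tendsto t atTop (𝓝 tstar) ∧ Tendsto u atTop (𝓝 ustar) ∧
      tstar = D *ᵥ ustar := by
  set q : ℕ → ℝ := fun k => √(((k : ℝ) + 1) / β k)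
  have hq : Summable q := summable_sqrt_succ_div (fun k => (hβ k).le) hsum
  set v : ℕ → Fin n → ℝ := fun k => D *ᵥ u (k + 1) - (t (k + 1) - (β k)⁻¹ • l k)
  have hvq : ∀ k, eucNorm (v k) ≤ √C * q k := fun k =>
    eucNorm_le_sqrt_mul_sqrt_div (hβ k) (by positivity) (hv k)
  have hDu_step : ∀ k, eucNorm (D *ᵥ u (k + 1) - D *ᵥ u k) ≤ √C * q k + √C * q k := by
    intro k
    have hsplit : D *ᵥ u (k + 1) - D *ᵥ u k = v k + (t (k + 1) - (D *ᵥ u k + (β k)⁻¹ • l k)) := by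
      simp only [v]; abel
    rw [hsplit]
    exact (eucNorm_add_le _ _).trans
      (add_le_add (hvq k) (eucNorm_le_sqrt_mul_sqrt_div (hβ k) (by positivity) (hc k)))
  obtain ⟨w, hw⟩ := exists_tendsto_of_summable_eucNorm_sub (f := fun k => D *ᵥ u k) <|
    .of_nonneg_of_le (fun _ => eucNorm_nonneg _) hDu_step ((hq.mul_left √C).add (hq.mul_left √C))
  obtain ⟨ustar, hu, rfl⟩ := exists_tendsto_of_tendsto_mulVec hD hw
  have hgap : ∀ k, eucNorm (t (k + 2) - D *ᵥ u (k + 2)) ≤ √C * q k + √C * q (k + 1) := by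
    intro k
    have hsplit : t (k + 2) - D *ᵥ u (k + 2) = (β k / β (k + 1)) • v k - v (k + 1) := by
      rw [div_eq_inv_mul, mul_smul, ← eq_smul_residual_of_dual_update (hβ k).ne' (hl k)]
      simp only [v]; abel
    have hβ_ratio : |β k / β (k + 1)| ≤ 1 := by
      rw [abs_of_pos (div_pos (hβ k) (hβ (k + 1))), div_le_one (hβ (k + 1))]
      exact hmono k.le_succ
    rw [hsplit]
    refine (eucNorm_sub_le _ _).trans (add_le_add ?_ (hvq (k + 1)))
    rw [eucNorm_smul]
    exact (mul_le_of_le_one_left (eucNorm_nonneg _) hβ_ratio).trans (hvq k)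
  have hq0 := hq.tendsto_atTop_zero
  have hgap0 : Tendsto (fun k => t (k + 2) - D *ᵥ u (k + 2)) atTop (𝓝 0) :=
    tendsto_zero_of_eucNorm_le hgap <| by
      simpa using (hq0.const_mul √C).add ((hq0.comp (tendsto_add_atTop_nat 1)).const_mul √C)
  refine ⟨D *ᵥ ustar, ustar, ?_, hu, rfl⟩
  rw [← tendsto_add_atTop_iff_nat 2]
  simpa using hgap0.add (hw.comp (tendsto_add_atTop_nat 2))

theorem anisotropic_ADMM_convergence_general (M N : ℕ) (A : Matrix (Fin M) (Fin N) ℝ)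
    (Dh Dv : Matrix (Fin N) (Fin N) ℝ) (g : Fin M → ℝ) (μ : ℝ) (hμ : 0 < μ)
    (t s u lt ls : ℕ → Fin N → ℝ) (βt βs : ℕ → ℝ)
    (hβt : ∀ k, 0 < βt k) (hβs : ∀ k, 0 < βs k)
    -- (i): t^{k+1} minimizes the anisotropic ℓ⁰ subproblem
    (ht : ∀ k, ∀ t' : Fin N → ℝ,
      μ * (l0 (t (k + 1)) : ℝ)
          + βt k / 2 * eucNorm (t (k + 1) - (Dh.mulVec (u k) + (βt k)⁻¹ • lt k)) ^ 2
        ≤ μ * (l0 t' : ℝ)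
          + βt k / 2 * eucNorm (t' - (Dh.mulVec (u k) + (βt k)⁻¹ • lt k)) ^ 2)
    -- (ii): s^{k+1} minimizes the anisotropic ℓ⁰ subproblem
    (hs : ∀ k, ∀ s' : Fin N → ℝ,
      μ * (l0 (s (k + 1)) : ℝ)
          + βs k / 2 * eucNorm (s (k + 1) - (Dv.mulVec (u k) + (βs k)⁻¹ • ls k)) ^ 2
        ≤ μ * (l0 s' : ℝ)
          + βs k / 2 * eucNorm (s' - (Dv.mulVec (u k) + (βs k)⁻¹ • ls k)) ^ 2)
    -- (iii): u^{k+1} minimizes the quadratic subproblem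
    (hu : ∀ k, ∀ v : Fin N → ℝ,
      1 / 2 * eucNorm (A.mulVec (u (k + 1)) - g) ^ 2
          + βt k / 2 * eucNorm (Dh.mulVec (u (k + 1)) - (t (k + 1) - (βt k)⁻¹ • lt k)) ^ 2
          + βs k / 2 * eucNorm (Dv.mulVec (u (k + 1)) - (s (k + 1) - (βs k)⁻¹ • ls k)) ^ 2
        ≤ 1 / 2 * eucNorm (A.mulVec v - g) ^ 2
          + βt k / 2 * eucNorm (Dh.mulVec v - (t (k + 1) - (βt k)⁻¹ • lt k)) ^ 2
          + βs k / 2 * eucNorm (Dv.mulVec v - (s (k + 1) - (βs k)⁻¹ • ls k)) ^ 2)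
    -- (iv): dual updates
    (hlt : ∀ k, lt (k + 1) = lt k - βt k • (t (k + 1) - Dh.mulVec (u (k + 1))))
    (hls : ∀ k, ls (k + 1) = ls k - βs k • (s (k + 1) - Dv.mulVec (u (k + 1))))
    -- (A.1): increasing penalties, summability, convergent ratio
    (hmonot : Monotone βt) (hmonos : Monotone βs)
    (hsumt : Summable fun k : ℕ => Real.sqrt ((k : ℝ) / βt k))
    (hsums : Summable fun k : ℕ => Real.sqrt ((k : ℝ) / βs k))
    -- (A.2): full rank
    (hDh : Function.Injective Dh.mulVec) (hDv : Function.Injective Dv.mulVec) :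
    ∃ tstar sstar ustar : Fin N → ℝ,
      Tendsto t atTop (𝓝 tstar) ∧ Tendsto s atTop (𝓝 sstar) ∧
      Tendsto u atTop (𝓝 ustar) ∧
      tstar = Dh.mulVec ustar ∧ sstar = Dv.mulVec ustar := by
  have hct k := mul_sq_eucNorm_sub_le_of_l0_min hμ.le (ht k (Dh *ᵥ u k + (βt k)⁻¹ • lt k))
  have hcs k := mul_sq_eucNorm_sub_le_of_l0_min hμ.le (hs k (Dv *ᵥ u k + (βs k)⁻¹ • ls k))
  have hvt (k : ℕ) := mul_nonneg (hβt k).le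
    (sq_nonneg (eucNorm (Dh *ᵥ u (k + 1) - (t (k + 1) - (βt k)⁻¹ • lt k))))
  have hvs (k : ℕ) := mul_nonneg (hβs k).le
    (sq_nonneg (eucNorm (Dv *ᵥ u (k + 1) - (s (k + 1) - (βs k)⁻¹ • ls k))))
  have hgrowth := le_mul_succ_of_descent (E := fun k => eucNorm (A *ᵥ u k - g) ^ 2)
    (fun k => sq_nonneg _) (fun k => add_nonneg (hvt k) (hvs k)) (a := 4 * (μ * N)) fun k => by
      have h := hu k (u k)
      rw [eucNorm_sub_sub (Dh *ᵥ u k), eucNorm_sub_sub (Dv *ᵥ u k)] at h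
      linarith [hct k, hcs k]
  have hcC (k : ℕ) : 2 * (μ * N) ≤ (eucNorm (A *ᵥ u 0 - g) ^ 2 + 4 * (μ * N)) * (k + 1) := by
    have : 0 ≤ μ * N := by positivity
    nlinarith [sq_nonneg (eucNorm (A *ᵥ u 0 - g)), (k.cast_nonneg : (0 : ℝ) ≤ k)]
  obtain ⟨tstar, ustar, htt, hut, rfl⟩ := admm_block_tendsto Dh t u lt βt hβt hmonot hsumt
    (fun k => (hct k).trans (hcC k)) (fun k => le_of_add_le_of_nonneg_left (hgrowth k) (hvs k))
    hlt hDh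
  obtain ⟨sstar, ustar', hst, hut', rfl⟩ := admm_block_tendsto Dv s u ls βs hβs hmonos hsums
    (fun k => (hcs k).trans (hcC k)) (fun k => le_of_add_le_of_nonneg_right (hgrowth k) (hvt k))
    hls hDv
  obtain rfl := tendsto_nhds_unique hut hut'
  exact ⟨_, _, ustar, htt, hst, hut, rfl, rfl⟩

/-- convergence of the anisotropic ADMM scheme under the growth
conditions (A.1) and full-rank conditions (A.2). -/
theorem anisotropic_ADMM_convergence (M N : ℕ) (A : Matrix (Fin M) (Fin N) ℝ)
    (Dh Dv : Matrix (Fin N) (Fin N) ℝ) (g : Fin M → ℝ) (μ : ℝ) (hμ : 0 < μ)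
    (t s u lt ls : ℕ → Fin N → ℝ) (βt βs : ℕ → ℝ)
    (hβt : ∀ k, 0 < βt k) (hβs : ∀ k, 0 < βs k)
    -- (i): t^{k+1} minimizes the anisotropic ℓ⁰ subproblem
    (ht : ∀ k, ∀ t' : Fin N → ℝ,
      μ * (l0 (t (k + 1)) : ℝ)
          + βt k / 2 * eucNorm (t (k + 1) - (Dh.mulVec (u k) + (βt k)⁻¹ • lt k)) ^ 2
        ≤ μ * (l0 t' : ℝ)
          + βt k / 2 * eucNorm (t' - (Dh.mulVec (u k) + (βt k)⁻¹ • lt k)) ^ 2)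
    -- (ii): s^{k+1} minimizes the anisotropic ℓ⁰ subproblem
    (hs : ∀ k, ∀ s' : Fin N → ℝ,
      μ * (l0 (s (k + 1)) : ℝ)
          + βs k / 2 * eucNorm (s (k + 1) - (Dv.mulVec (u k) + (βs k)⁻¹ • ls k)) ^ 2
        ≤ μ * (l0 s' : ℝ)
          + βs k / 2 * eucNorm (s' - (Dv.mulVec (u k) + (βs k)⁻¹ • ls k)) ^ 2)
    -- (iii): u^{k+1} minimizes the quadratic subproblem
    (hu : ∀ k, ∀ v : Fin N → ℝ,
      1 / 2 * eucNorm (A.mulVec (u (k + 1)) - g) ^ 2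
          + βt k / 2 * eucNorm (Dh.mulVec (u (k + 1)) - (t (k + 1) - (βt k)⁻¹ • lt k)) ^ 2
          + βs k / 2 * eucNorm (Dv.mulVec (u (k + 1)) - (s (k + 1) - (βs k)⁻¹ • ls k)) ^ 2
        ≤ 1 / 2 * eucNorm (A.mulVec v - g) ^ 2
          + βt k / 2 * eucNorm (Dh.mulVec v - (t (k + 1) - (βt k)⁻¹ • lt k)) ^ 2
          + βs k / 2 * eucNorm (Dv.mulVec v - (s (k + 1) - (βs k)⁻¹ • ls k)) ^ 2)
    -- (iv): dual updates
    (hlt : ∀ k, lt (k + 1) = lt k - βt k • (t (k + 1) - Dh.mulVec (u (k + 1))))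
    (hls : ∀ k, ls (k + 1) = ls k - βs k • (s (k + 1) - Dv.mulVec (u (k + 1))))
    -- (A.1): increasing penalties, summability, convergent ratio
    (hmonot : Monotone βt) (hmonos : Monotone βs)
    (hsumt : Summable fun k : ℕ => Real.sqrt ((k : ℝ) / βt k))
    (hsums : Summable fun k : ℕ => Real.sqrt ((k : ℝ) / βs k))
    (hratio : ∃ c : ℝ, c ≠ 0 ∧ Tendsto (fun k => βs k / βt k) atTop (𝓝 c))
    -- (A.2): full rank
    (hDh : Function.Injective Dh.mulVec) (hDv : Function.Injective Dv.mulVec) :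
    ∃ tstar sstar ustar : Fin N → ℝ,
      Tendsto t atTop (𝓝 tstar) ∧ Tendsto s atTop (𝓝 sstar) ∧
      Tendsto u atTop (𝓝 ustar) ∧
      tstar = Dh.mulVec ustar ∧ sstar = Dv.mulVec ustar :=
  anisotropic_ADMM_convergence_general M N A Dh Dv g μ hμ t s u lt ls βt βs hβt hβs ht hs hu hlt hls
    hmonot hmonos hsumt hsums hDh hDv
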